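/- arXiv:1606.04551 — 3 statements merged into one kernel-verified Lean document; each statement's English description precedes it below -/
import Mathlib

section
/- The Krasnosel'skii–Mann iteration x_{k+1} = x_k + η(T(x_k) - x_k) with η ∈ (0,1) and T nonexpansive with a fixed point satisfies the fixed-point residual bound: Σ_{k=0}^∞ ‖T(x_k) - x_k‖² ≤ ‖x_0 - x*‖²/(η(1-η)) for any fixed point x*; in particular ‖T(x_k) - x_k‖ → 0. -/
/-!
Writing the Krasnosel'skii–Mann step as the convex combination `x_{k+1} = (1 - η) x_k + η T x_k`,
the identity `‖(1 - t) a + t b‖² = (1 - t) ‖a‖² + t ‖b‖² - t (1 - t) ‖a - b‖²` applied around a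
fixed point `x*`, together with `‖T x_k - x*‖ ≤ ‖x_k - x*‖`, gives the Fejér-type decrease
`η (1 - η) ‖T x_k - x_k‖² ≤ ‖x_k - x*‖² - ‖x_{k+1} - x*‖²`. Summing telescopes, which bounds
every partial sum of the squared residuals, and the terms of a convergent series tend to `0`.
-/

open Filter Topology

section InnerProductSpace

variable {E : Type*} [NormedAddCommGroup E] [InnerProductSpace ℝ E]

theorem norm_add_smul_sub_sq (u v : E) (t : ℝ) :
    ‖u + t • (v - u)‖ ^ 2 = (1 - t) * ‖u‖ ^ 2 + t * ‖v‖ ^ 2 - t * (1 - t) * ‖v - u‖ ^ 2 := by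
  rw [norm_add_sq_real, norm_smul, mul_pow, Real.norm_eq_abs, sq_abs, inner_smul_right,
    inner_sub_right, norm_sub_sq_real, real_inner_self_eq_norm_sq, real_inner_comm]
  ring

theorem norm_add_smul_sub_sub_sq_le {x y p : E} {t : ℝ} (ht : 0 ≤ t) (hy : ‖y - p‖ ≤ ‖x - p‖) :
    ‖x + t • (y - x) - p‖ ^ 2 ≤ ‖x - p‖ ^ 2 - t * (1 - t) * ‖y - x‖ ^ 2 := by
  have hsq : ‖y - p‖ ^ 2 ≤ ‖x - p‖ ^ 2 := pow_le_pow_left₀ (norm_nonneg _) hy 2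
  have hrw : x + t • (y - x) - p = (x - p) + t • ((y - p) - (x - p)) := by
    rw [sub_sub_sub_cancel_right]; abel
  rw [hrw, norm_add_smul_sub_sq, sub_sub_sub_cancel_right]
  nlinarith

end InnerProductSpace

theorem sum_range_le_div_of_mul_le_sub {a d : ℕ → ℝ} {c : ℝ} (hc : 0 < c) (hd : ∀ k, 0 ≤ d k)
    (h : ∀ k, c * a k ≤ d k - d (k + 1)) (n : ℕ) :
    ∑ k ∈ Finset.range n, a k ≤ d 0 / c := by
  have htelescope : c * ∑ k ∈ Finset.range n, a k ≤ d 0 - d n := by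
    rw [Finset.mul_sum, ← Finset.sum_range_sub']
    exact Finset.sum_le_sum fun k _ => h k
  rw [le_div_iff₀ hc]
  linarith [hd n]

theorem tendsto_atTop_zero_of_summable_sq {f : ℕ → ℝ} (h : Summable fun k => f k ^ 2) :
    Tendsto f atTop (𝓝 0) := by
  rw [tendsto_zero_iff_abs_tendsto_zero, Function.comp_def]
  simpa only [Real.sqrt_sq_eq_abs, Real.sqrt_zero] using h.tendsto_atTop_zero.sqrt

theorem km_iteration_residual_bound_general
    {H : Type*} [NormedAddCommGroup H] [InnerProductSpace ℝ H]
    (T : H → H) (hT : ∀ x y, ‖T x - T y‖ ≤ ‖x - y‖)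
    (η : ℝ) (hη₁ : 0 < η) (hη₂ : η < 1)
    (xstar : H) (hfix : T xstar = xstar)
    (x : ℕ → H) (hx : ∀ k, x (k + 1) = x k + η • (T (x k) - x k)) :
    (∑' k : ℕ, ‖T (x k) - x k‖ ^ 2) ≤ ‖x 0 - xstar‖ ^ 2 / (η * (1 - η)) ∧
    Filter.Tendsto (fun k => ‖T (x k) - x k‖) Filter.atTop (nhds 0) := by
  have hdecrease (k : ℕ) : η * (1 - η) * ‖T (x k) - x k‖ ^ 2 ≤
      ‖x k - xstar‖ ^ 2 - ‖x (k + 1) - xstar‖ ^ 2 := by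
    have hquasi : ‖T (x k) - xstar‖ ≤ ‖x k - xstar‖ := by
      simpa only [hfix] using hT (x k) xstar
    have hstep := norm_add_smul_sub_sub_sq_le hη₁.le hquasi
    rw [← hx k] at hstep
    linarith
  have hpartial := sum_range_le_div_of_mul_le_sub (mul_pos hη₁ (sub_pos.2 hη₂))
    (fun k => sq_nonneg ‖x k - xstar‖) hdecrease
  have hsummable := summable_of_sum_range_le (fun k => sq_nonneg _) hpartial
  exact ⟨hsummable.tsum_le_of_sum_range_le hpartial,
    tendsto_atTop_zero_of_summable_sq hsummable⟩

/-- The Krasnosel'skii–Mann iteration `x_{k+1} = x_k + η (T x_k - x_k)` with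
`η ∈ (0,1)` and `T` nonexpansive with fixed point `x*` satisfies
`∑ₖ ‖T x_k - x_k‖² ≤ ‖x_0 - x*‖² / (η (1-η))`, and in particular
`‖T x_k - x_k‖ → 0`. -/
theorem km_iteration_residual_bound
    {H : Type*} [NormedAddCommGroup H] [InnerProductSpace ℝ H] [CompleteSpace H]
    (T : H → H) (hT : ∀ x y, ‖T x - T y‖ ≤ ‖x - y‖)
    (η : ℝ) (hη₁ : 0 < η) (hη₂ : η < 1)
    (xstar : H) (hfix : T xstar = xstar)
    (x : ℕ → H) (hx : ∀ k, x (k + 1) = x k + η • (T (x k) - x k)) :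
    (∑' k : ℕ, ‖T (x k) - x k‖ ^ 2) ≤ ‖x 0 - xstar‖ ^ 2 / (η * (1 - η)) ∧
    Filter.Tendsto (fun k => ‖T (x k) - x k‖) Filter.atTop (nhds 0) :=
  km_iteration_residual_bound_general T hT η hη₁ hη₂ xstar hfix x hx
end

section
/- For a convex differentiable f with L-Lipschitz gradient and step 0 < η ≤ 1/L, one step of forward-backward splitting x⁺ = prox_{ηg}(x - η∇f(x)) satisfies the sufficient decrease property: F(x⁺) ≤ F(x) - (1/(2η))‖x⁺ - x‖², where F = f + g. -/
/-! The descent lemma bounds `f x⁺` by the linearization of `f` at `x` plus `L / 2 * ‖x⁺ - x‖²`.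
The prox objective `g + ‖· - (x - η ∇f x)‖² / (2η)` is `η⁻¹`-strongly convex, so comparing its
minimizer `x⁺` with `x` gains an extra `‖x⁺ - x‖² / (2η)`; expanding the squares turns this into
`g x⁺ ≤ g x - ⟪∇f x, x⁺ - x⟫ - ‖x⁺ - x‖² / η`. In the sum of the two bounds the linear terms cancel,
and `L ≤ 1 / η` leaves the decrease `‖x⁺ - x‖² / (2η)`. -/

open Set Filter Topology
open scoped InnerProductSpace

section Descent

variable {E : Type*} [NormedAddCommGroup E] [NormedSpace ℝ E] {f : E → ℝ} {f' : E → E →L[ℝ] ℝ}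
  {L : ℝ}

theorem image_le_of_hasFDerivAt_of_lipschitz (hf : ∀ x, HasFDerivAt f (f' x) x)
    (hlip : ∀ x y, ‖f' x - f' y‖ ≤ L * ‖x - y‖) (x y : E) :
    f y ≤ f x + f' x (y - x) + L / 2 * ‖y - x‖ ^ 2 := by
  set d := y - x
  have hline : ∀ t : ℝ, HasDerivAt (fun t : ℝ ↦ f (x + t • d)) (f' (x + t • d) d) t := fun t ↦ by
    simpa [Function.comp_def] using
      (hf (x + t • d)).comp_hasDerivAt t (((hasDerivAt_id t).smul_const d).const_add x)
  have hquad : ∀ t : ℝ, HasDerivAt (fun t : ℝ ↦ f x + t * f' x d + L / 2 * t ^ 2 * ‖d‖ ^ 2)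
      (f' x d + L * t * ‖d‖ ^ 2) t := fun t ↦
    ((((hasDerivAt_id' t).mul_const (f' x d)).const_add (f x)).add
      (((hasDerivAt_pow 2 t).const_mul (L / 2)).mul_const (‖d‖ ^ 2))).congr_deriv (by ring)
  have hbound : ∀ t ∈ Ico (0 : ℝ) 1, f' (x + t • d) d ≤ f' x d + L * t * ‖d‖ ^ 2 := by
    intro t ht
    calc f' (x + t • d) d = f' x d + (f' (x + t • d) - f' x) d := by simp
      _ ≤ f' x d + ‖f' (x + t • d) - f' x‖ * ‖d‖ := by
        gcongr; exact (le_abs_self _).trans ((f' (x + t • d) - f' x).le_opNorm d)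
      _ ≤ f' x d + L * ‖t • d‖ * ‖d‖ := by gcongr; simpa using hlip (x + t • d) x
      _ = f' x d + L * t * ‖d‖ ^ 2 := by rw [norm_smul, Real.norm_of_nonneg ht.1]; ring
  have := image_le_of_deriv_right_le_deriv_boundary
    (fun t _ ↦ (hline t).continuousAt.continuousWithinAt) (fun t _ ↦ (hline t).hasDerivWithinAt)
    (by simp) (fun t _ ↦ (hquad t).continuousAt.continuousWithinAt)
    (fun t _ ↦ (hquad t).hasDerivWithinAt) hbound (right_mem_Icc.2 zero_le_one)
  simpa [d] using this

end Descent

section StrongConvexity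

variable {E : Type*} [NormedAddCommGroup E] [NormedSpace ℝ E] {s : Set E} {m : ℝ} {f g : E → ℝ}

theorem ConvexOn.add_strongConvexOn (hf : ConvexOn ℝ s f) (hg : StrongConvexOn s m g) :
    StrongConvexOn s m (f + g) := by
  show UniformConvexOn _ _ _
  simpa using (uniformConvexOn_zero.2 hf).add hg

theorem StrongConvexOn.add_mul_norm_sub_sq_le_of_isMinOn (hf : StrongConvexOn s m f) {x₀ z : E}
    (hx₀ : x₀ ∈ s) (hmin : IsMinOn f s x₀) (hz : z ∈ s) :
    f x₀ + m / 2 * ‖z - x₀‖ ^ 2 ≤ f z := by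
  set q := m / 2 * ‖z - x₀‖ ^ 2 with hq
  have hsegment : ∀ t ∈ Ioo (0 : ℝ) 1, (1 - t) * q ≤ f z - f x₀ := by
    intro t ⟨ht₀, ht₁⟩
    have hconv := hf.2 hx₀ hz (sub_nonneg.2 ht₁.le) ht₀.le (sub_add_cancel 1 t)
    have hle : f x₀ ≤ _ := hmin (hf.1 hx₀ hz (sub_nonneg.2 ht₁.le) ht₀.le (sub_add_cancel 1 t))
    simp only [smul_eq_mul] at hconv
    rw [norm_sub_rev, ← hq] at hconv
    have : t * ((1 - t) * q) ≤ t * (f z - f x₀) := by linarith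
    exact le_of_mul_le_mul_left this ht₀
  have hlim : Tendsto (fun t : ℝ ↦ (1 - t) * q) (𝓝[>] 0) (𝓝 q) := by
    have : Tendsto (fun t : ℝ ↦ (1 - t) * q) (𝓝 0) (𝓝 ((1 - 0) * q)) :=
      (tendsto_const_nhds.sub tendsto_id).mul tendsto_const_nhds
    rw [sub_zero, one_mul] at this
    exact this.mono_left nhdsWithin_le_nhds
  exact le_sub_iff_add_le'.1 <| le_of_tendsto hlim <|
    eventually_of_mem (Ioo_mem_nhdsGT one_pos) hsegment

end StrongConvexity

section InnerProductSpace

variable {E : Type*} [NormedAddCommGroup E] [InnerProductSpace ℝ E]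

theorem image_le_of_hasGradientAt_of_lipschitz [CompleteSpace E] {f : E → ℝ} {f' : E → E}
    {L : ℝ} (hf : ∀ x, HasGradientAt f (f' x) x) (hlip : ∀ x y, ‖f' x - f' y‖ ≤ L * ‖x - y‖)
    (x y : E) :
    f y ≤ f x + ⟪f' x, y - x⟫_ℝ + L / 2 * ‖y - x‖ ^ 2 := by
  simpa using image_le_of_hasFDerivAt_of_lipschitz (fun x ↦ (hf x).hasFDerivAt)
    (fun x y ↦ by rw [← map_sub, LinearIsometryEquiv.norm_map]; exact hlip x y) x y

theorem strongConvexOn_univ_norm_sub_sq_div (v : E) (η : ℝ) :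
    StrongConvexOn univ η⁻¹ fun x ↦ ‖x - v‖ ^ 2 / (2 * η) := by
  rw [strongConvexOn_iff_convex]
  have : (fun x ↦ ‖x - v‖ ^ 2 / (2 * η) - η⁻¹ / 2 * ‖x‖ ^ 2)
      = fun x ↦ (-η⁻¹ • innerₛₗ ℝ v) x + ‖v‖ ^ 2 / (2 * η) := by
    ext x
    simp only [norm_sub_sq_real, real_inner_comm, neg_smul, LinearMap.neg_apply,
      LinearMap.smul_apply, innerₛₗ_apply_apply, smul_eq_mul]
    ring
  rw [this]
  exact (LinearMap.convexOn _ convex_univ).add_const _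

theorem ConvexOn.le_sub_inner_sub_of_isMinOn_prox {g : E → ℝ} (hg : ConvexOn ℝ univ g) {η : ℝ}
    (hη : 0 < η) {x d x' : E}
    (hmin : IsMinOn (fun z ↦ g z + ‖z - (x - η • d)‖ ^ 2 / (2 * η)) univ x') :
    g x' ≤ g x - ⟪d, x' - x⟫_ℝ - ‖x' - x‖ ^ 2 / η := by
  have hstrong := (hg.add_strongConvexOn (strongConvexOn_univ_norm_sub_sq_div (x - η • d) η))
    |>.add_mul_norm_sub_sq_le_of_isMinOn (mem_univ x') hmin (mem_univ x)
  have hx' : x' - (x - η • d) = (x' - x) + η • d := by abel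
  have hx : x - (x - η • d) = η • d := by abel
  simp only [Pi.add_apply, hx', hx, norm_add_sq_real, norm_smul, inner_smul_right,
    Real.norm_of_nonneg hη.le, norm_sub_rev x x', real_inner_comm d] at hstrong
  field_simp at hstrong ⊢
  linarith

end InnerProductSpace

theorem fbs_sufficient_decrease_general
    {n : ℕ} (f g : EuclideanSpace ℝ (Fin n) → ℝ)
    (f' : EuclideanSpace ℝ (Fin n) → EuclideanSpace ℝ (Fin n))
    (L : ℝ)
    (hf' : ∀ x, HasGradientAt f (f' x) x)
    (hlip : ∀ x y, ‖f' x - f' y‖ ≤ L * ‖x - y‖)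
    (hg : ConvexOn ℝ Set.univ g)
    (η : ℝ) (hη₁ : 0 < η) (hη₂ : η ≤ 1 / L)
    (x xplus : EuclideanSpace ℝ (Fin n))
    (hmin : ∀ z, g xplus + ‖xplus - (x - η • f' x)‖ ^ 2 / (2 * η)
        ≤ g z + ‖z - (x - η • f' x)‖ ^ 2 / (2 * η)) :
    f xplus + g xplus ≤ f x + g x - (1 / (2 * η)) * ‖xplus - x‖ ^ 2 := by
  have hL : 0 < L := one_div_pos.mp (hη₁.trans_le hη₂)
  have hLη : L ≤ 1 / η := (le_one_div hL hη₁).2 hη₂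
  have hdescent := image_le_of_hasGradientAt_of_lipschitz hf' hlip x xplus
  have hprox := hg.le_sub_inner_sub_of_isMinOn_prox hη₁ (isMinOn_univ_iff.2 hmin)
  have hquad : L / 2 * ‖xplus - x‖ ^ 2 ≤ 1 / (2 * η) * ‖xplus - x‖ ^ 2 := by
    refine mul_le_mul_of_nonneg_right ?_ (sq_nonneg _)
    rw [← one_div_mul_one_div]
    linarith
  have hsplit : ‖xplus - x‖ ^ 2 / η = 2 * (1 / (2 * η) * ‖xplus - x‖ ^ 2) := by
    field_simp
  linarith

/-- Sufficient decrease for one forward-backward step: if `f` is convex with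
`L`-Lipschitz gradient, `g` convex, `0 < η ≤ 1/L`, and
`x⁺ = prox_{ηg}(x - η ∇f x)`, then
`F(x⁺) ≤ F(x) - (1/(2η)) ‖x⁺ - x‖²` where `F = f + g`. -/
theorem fbs_sufficient_decrease
    {n : ℕ} (f g : EuclideanSpace ℝ (Fin n) → ℝ)
    (f' : EuclideanSpace ℝ (Fin n) → EuclideanSpace ℝ (Fin n))
    (L : ℝ) (hL : 0 < L)
    (hf : ConvexOn ℝ Set.univ f)
    (hf' : ∀ x, HasGradientAt f (f' x) x)
    (hlip : ∀ x y, ‖f' x - f' y‖ ≤ L * ‖x - y‖)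
    (hg : ConvexOn ℝ Set.univ g)
    (η : ℝ) (hη₁ : 0 < η) (hη₂ : η ≤ 1 / L)
    (x xplus : EuclideanSpace ℝ (Fin n))
    (hmin : ∀ z, g xplus + ‖xplus - (x - η • f' x)‖ ^ 2 / (2 * η)
        ≤ g z + ‖z - (x - η • f' x)‖ ^ 2 / (2 * η)) :
    f xplus + g xplus ≤ f x + g x - (1 / (2 * η)) * ‖xplus - x‖ ^ 2 :=
  fbs_sufficient_decrease_general f g f' L hf' hlip hg η hη₁ hη₂ x xplus hmin
end

section
/- If f is μ-strongly convex with L-Lipschitz gradient and 0 < η ≤ 2/(μ + L), the gradient map F(x) = x - η∇f(x) is a contraction with factor (1 - ημ), i.e., ‖F(x) - F(y)‖ ≤ (1 - ημ)‖x - y‖ whenever η ≤ 2/(μ+L); consequently the forward-backward map prox_{ηg} ∘ F is also a (1-ημ)-contraction and has a unique fixed point. -/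
/-!
The function `h = f - (μ/2)‖·‖²` is convex and, by the descent lemma, `(L - μ)`-smooth, so its
gradient `∇f - μ • id` is co-coercive: `‖∇h x - ∇h y‖² ≤ (L - μ) ⟪∇h x - ∇h y, x - y⟫`.
Writing `x - y - η (∇f x - ∇f y) = (1 - ημ)(x - y) - η (∇h x - ∇h y)` and expanding the square,
co-coercivity together with `η (μ + L) ≤ 2` absorbs the `‖∇h x - ∇h y‖²` term, leaving the
factor `(1 - ημ)²`. The proximal map is firmly nonexpansive by the variational inequality
characterizing its value, so the forward-backward map is a `(1 - ημ)`-contraction and Banach's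
fixed point theorem applies.
-/

open Set Filter Topology InnerProductSpace

lemma le_of_forall_mem_Ioo_le_add_mul {a b c : ℝ} (h : ∀ t ∈ Ioo (0 : ℝ) 1, a ≤ b + t * c) :
    a ≤ b := by
  have hlim : Tendsto (fun t : ℝ => b + t * c) (𝓝[>] 0) (𝓝 b) := by
    simpa using ((tendsto_id.mul_const c).const_add b).mono_left
      (nhdsWithin_le_nhds (a := (0 : ℝ)))
  exact ge_of_tendsto hlim (Filter.mem_of_superset (Ioo_mem_nhdsGT one_pos) h)

section

variable {E : Type*} [NormedAddCommGroup E] [InnerProductSpace ℝ E]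

lemma HasGradientAt.hasDerivAt_comp_add_smul [CompleteSpace E] {c : E → ℝ} {g x u : E} {t : ℝ}
    (h : HasGradientAt c g (x + t • u)) :
    HasDerivAt (fun s : ℝ => c (x + s • u)) ⟪g, u⟫_ℝ t := by
  have hline : HasDerivAt (fun s : ℝ => x + s • u) u t :=
    ((hasDerivAt_id t).smul_const u).const_add x |>.congr_deriv (one_smul ℝ u)
  have := h.hasFDerivAt.comp_hasDerivAt t hline
  simp only [Function.comp_def, InnerProductSpace.toDual_apply_apply] at this
  exact this

lemma ConvexOn.add_le_of_hasDerivAt {c : E → ℝ} (hc : ConvexOn ℝ univ c) {x z : E} {d : ℝ}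
    (h : HasDerivAt (fun t : ℝ => c (x + t • (z - x))) d 0) : c x + d ≤ c z := by
  have hline : ConvexOn ℝ univ (fun t : ℝ => c (x + t • (z - x))) := by
    simpa [Function.comp_def, AffineMap.lineMap_apply, add_comm] using
      hc.comp_affineMap (AffineMap.lineMap x z)
  have := hline.le_slope_of_hasDerivAt (mem_univ 0) (mem_univ 1) one_pos h
  simp only [slope_def_field, zero_smul, add_zero, one_smul, add_sub_cancel, sub_zero,
    div_one] at this
  linarith

lemma StrongConvexOn.add_inner_add_le [CompleteSpace E] {f : E → ℝ} {μ : ℝ}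
    (hf : StrongConvexOn univ μ f) {g x : E} (h : HasGradientAt f g x) (z : E) :
    f x + ⟪g, z - x⟫_ℝ + μ / 2 * ‖z - x‖ ^ 2 ≤ f z := by
  have hline : HasDerivAt (fun t : ℝ => x + t • (z - x)) (z - x) 0 :=
    ((hasDerivAt_id (0 : ℝ)).smul_const (z - x)).const_add x |>.congr_deriv (one_smul ℝ _)
  have hderiv : HasDerivAt (fun t : ℝ => f (x + t • (z - x)) - μ / 2 * ‖x + t • (z - x)‖ ^ 2)
      (⟪g, z - x⟫_ℝ - μ / 2 * (2 * ⟪x, z - x⟫_ℝ)) 0 := by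
    refine HasDerivAt.sub ?_ (by simpa using hline.norm_sq.const_mul (μ / 2))
    exact HasGradientAt.hasDerivAt_comp_add_smul (by simpa using h)
  have := (strongConvexOn_iff_convex.mp hf).add_le_of_hasDerivAt hderiv
  have hz : ‖z‖ ^ 2 = ‖x‖ ^ 2 + 2 * ⟪x, z - x⟫_ℝ + ‖z - x‖ ^ 2 := by
    rw [← norm_add_sq_real, add_sub_cancel]
  rw [hz] at this
  linarith

lemma StrongConvexOn.mul_norm_sq_le_inner_sub [CompleteSpace E] {f : E → ℝ} {f' : E → E} {μ : ℝ}
    (hf : StrongConvexOn univ μ f) (hf' : ∀ x, HasGradientAt f (f' x) x) (x y : E) :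
    μ * ‖x - y‖ ^ 2 ≤ ⟪f' x - f' y, x - y⟫_ℝ := by
  have hxy := hf.add_inner_add_le (hf' x) y
  have hyx := hf.add_inner_add_le (hf' y) x
  rw [← neg_sub x y, inner_neg_right, norm_neg] at hxy
  rw [inner_sub_left]
  linarith

lemma le_add_inner_add_of_inner_sub_le [CompleteSpace E] {c : E → ℝ} {G : E → E} {K : ℝ}
    (hc : ∀ x, HasGradientAt c (G x) x) (hG : ∀ x y, ⟪G x - G y, x - y⟫_ℝ ≤ K * ‖x - y‖ ^ 2)
    (x z : E) : c z ≤ c x + ⟪G x, z - x⟫_ℝ + K / 2 * ‖z - x‖ ^ 2 := by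
  set u := z - x
  have hφ : ∀ t, HasDerivAt
      (fun t : ℝ => c (x + t • u) - t * ⟪G x, u⟫_ℝ - K / 2 * t ^ 2 * ‖u‖ ^ 2)
      (⟪G (x + t • u), u⟫_ℝ - ⟪G x, u⟫_ℝ - K * t * ‖u‖ ^ 2) t := by
    intro t
    refine ((((hc (x + t • u)).hasDerivAt_comp_add_smul).fun_sub
      ((hasDerivAt_id' t).mul_const ⟪G x, u⟫_ℝ)).fun_sub
      (((hasDerivAt_pow 2 t).const_mul (K / 2)).mul_const (‖u‖ ^ 2))).congr_deriv ?_
    simp only [Nat.cast_ofNat, one_mul, pow_one, Nat.add_one_sub_one]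
    ring
  obtain ⟨ξ, hξ, hslope⟩ := exists_hasDerivAt_eq_slope _ _ one_pos
    (HasDerivAt.continuousOn fun t _ => hφ t) fun t _ => hφ t
  have hξbound : ⟪G (x + ξ • u) - G x, u⟫_ℝ ≤ K * ξ * ‖u‖ ^ 2 := by
    have := hG (x + ξ • u) x
    rw [add_sub_cancel_left, inner_smul_right, norm_smul, Real.norm_of_nonneg hξ.1.le] at this
    nlinarith [hξ.1]
  rw [inner_sub_left] at hξbound
  simp only [zero_smul, add_zero, one_smul, zero_mul, sub_zero, one_mul, one_pow,
    zero_pow two_ne_zero, mul_zero, div_one, show x + u = z from add_sub_cancel x z] at hslope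
  linarith

lemma norm_sub_sq_le_mul_inner {c : E → ℝ} {G : E → E} {K : ℝ} (hK : 0 ≤ K)
    (hlow : ∀ x z, c x + ⟪G x, z - x⟫_ℝ ≤ c z)
    (hup : ∀ x z, c z ≤ c x + ⟪G x, z - x⟫_ℝ + K / 2 * ‖z - x‖ ^ 2) (x y : E) :
    ‖G x - G y‖ ^ 2 ≤ K * ⟪G x - G y, x - y⟫_ℝ := by
  have hbound : ∀ K' > 0, K ≤ K' → ∀ a b,
      c a + ⟪G a, b - a⟫_ℝ + ‖G b - G a‖ ^ 2 / (2 * K') ≤ c b := by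
    intro K' hK' hKK' a b
    set ε := G b - G a
    -- evaluate both bounds at the gradient step `b - ε / K'`
    have hw := (hlow a (b - K'⁻¹ • ε)).trans (hup b (b - K'⁻¹ • ε))
    rw [sub_sub_cancel_left, norm_neg, norm_smul, inner_neg_right, inner_smul_right,
      sub_right_comm, inner_sub_right, inner_smul_right,
      Real.norm_of_nonneg (inv_nonneg.2 hK'.le)] at hw
    have hε : ⟪G b, ε⟫_ℝ - ⟪G a, ε⟫_ℝ = ‖ε‖ ^ 2 := by
      rw [← inner_sub_left, real_inner_self_eq_norm_sq]
    have hquad : K / 2 * (K'⁻¹ * ‖ε‖) ^ 2 ≤ K'⁻¹ / 2 * ‖ε‖ ^ 2 := by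
      have : K * K'⁻¹ ≤ 1 := by rwa [mul_inv_le_iff₀ hK', one_mul]
      calc K / 2 * (K'⁻¹ * ‖ε‖) ^ 2 = (K * K'⁻¹) * (K'⁻¹ / 2 * ‖ε‖ ^ 2) := by ring
        _ ≤ 1 * (K'⁻¹ / 2 * ‖ε‖ ^ 2) := by gcongr
        _ = K'⁻¹ / 2 * ‖ε‖ ^ 2 := one_mul _
    rw [div_eq_mul_inv, mul_inv]
    linear_combination hw + hquad - K'⁻¹ * hε
  have hcoc : ∀ K' > 0, K ≤ K' → ‖G x - G y‖ ^ 2 ≤ K' * ⟪G x - G y, x - y⟫_ℝ := by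
    intro K' hK' hKK'
    have hxy := hbound K' hK' hKK' x y
    have hyx := hbound K' hK' hKK' y x
    rw [← neg_sub x y, inner_neg_right, norm_sub_rev] at hxy
    rw [← div_le_iff₀' hK', inner_sub_left]
    have hhalves : ‖G x - G y‖ ^ 2 / K'
        = ‖G x - G y‖ ^ 2 / (2 * K') + ‖G x - G y‖ ^ 2 / (2 * K') := by ring
    linarith
  refine le_of_forall_mem_Ioo_le_add_mul (c := ⟪G x - G y, x - y⟫_ℝ) fun t ht => ?_
  rw [← add_mul]
  exact hcoc (K + t) (by linarith [ht.1]) (by linarith [ht.1])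

section GradientStep

variable [CompleteSpace E] {f : E → ℝ} {f' : E → E} {μ L : ℝ}

lemma StrongConvexOn.norm_sq_le_mul_inner_sub_smul (hμL : μ ≤ L) (hf : StrongConvexOn univ μ f)
    (hf' : ∀ x, HasGradientAt f (f' x) x) (hlip : ∀ x y, ‖f' x - f' y‖ ≤ L * ‖x - y‖)
    (x y : E) :
    ‖(f' x - f' y) - μ • (x - y)‖ ^ 2 ≤ (L - μ) * ⟪(f' x - f' y) - μ • (x - y), x - y⟫_ℝ := by
  have hbregman : ∀ a z : E,
      (f z - μ / 2 * ‖z‖ ^ 2) - ((f a - μ / 2 * ‖a‖ ^ 2) + ⟪f' a - μ • a, z - a⟫_ℝ)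
        = f z - (f a + ⟪f' a, z - a⟫_ℝ) - μ / 2 * ‖z - a‖ ^ 2 := by
    intro a z
    have hz : ‖z‖ ^ 2 = ‖a‖ ^ 2 + 2 * ⟪a, z - a⟫_ℝ + ‖z - a‖ ^ 2 := by
      rw [← norm_add_sq_real, add_sub_cancel]
    rw [hz, inner_sub_left, real_inner_smul_left]
    ring
  have hsmooth : ∀ a z, ⟪f' a - f' z, a - z⟫_ℝ ≤ L * ‖a - z‖ ^ 2 := fun a z => by
    nlinarith [real_inner_le_norm (f' a - f' z) (a - z), hlip a z, norm_nonneg (a - z)]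
  have := norm_sub_sq_le_mul_inner (c := fun z => f z - μ / 2 * ‖z‖ ^ 2)
    (G := fun z => f' z - μ • z) (sub_nonneg.2 hμL)
    (fun a z => by linarith [hbregman a z, hf.add_inner_add_le (hf' a) z])
    (fun a z => by linarith [hbregman a z, le_add_inner_add_of_inner_sub_le hf' hsmooth a z]) x y
  rwa [sub_sub_sub_comm, ← smul_sub] at this

lemma StrongConvexOn.norm_gradient_step_sub_le (hμL : μ ≤ L) (hf : StrongConvexOn univ μ f)
    (hf' : ∀ x, HasGradientAt f (f' x) x) (hlip : ∀ x y, ‖f' x - f' y‖ ≤ L * ‖x - y‖)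
    {η : ℝ} (hη : 0 ≤ η) (hηL : η * (μ + L) ≤ 2) (x y : E) :
    ‖(x - η • f' x) - (y - η • f' y)‖ ≤ (1 - η * μ) * ‖x - y‖ := by
  set u := x - y
  set e := (f' x - f' y) - μ • u
  have hcoc : ‖e‖ ^ 2 ≤ (L - μ) * ⟪e, u⟫_ℝ := hf.norm_sq_le_mul_inner_sub_smul hμL hf' hlip x y
  have hmono : 0 ≤ ⟪e, u⟫_ℝ := by
    rw [inner_sub_left, real_inner_smul_left, real_inner_self_eq_norm_sq, sub_nonneg]
    exact hf.mul_norm_sq_le_inner_sub hf' x y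
  have hημ : 0 ≤ 1 - η * μ := by nlinarith
  have hstep : (x - η • f' x) - (y - η • f' y) = (1 - η * μ) • u - η • e := by
    simp only [u, e]
    module
  rw [hstep, ← pow_le_pow_iff_left₀ (norm_nonneg _) (by positivity) two_ne_zero,
    norm_sub_sq_real, real_inner_smul_left, real_inner_smul_right, norm_smul, norm_smul,
    Real.norm_of_nonneg hημ, Real.norm_of_nonneg hη, real_inner_comm]
  nlinarith [mul_le_mul_of_nonneg_left hcoc (sq_nonneg η),
    mul_nonneg (mul_nonneg hη hmono) (sub_nonneg.2 hηL)]

end GradientStep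

/-- `p = prox_{ηg} y`. -/
def IsProxPoint (g : E → ℝ) (η : ℝ) (y p : E) : Prop :=
  ∀ x, g p + ‖p - y‖ ^ 2 / (2 * η) ≤ g x + ‖x - y‖ ^ 2 / (2 * η)

namespace IsProxPoint

variable {g : E → ℝ} {η : ℝ}

lemma inner_le (hg : ConvexOn ℝ univ g) (hη : 0 < η) {y p : E} (hp : IsProxPoint g η y p)
    (q : E) : ⟪y - p, q - p⟫_ℝ ≤ η * (g q - g p) := by
  refine le_of_forall_mem_Ioo_le_add_mul (c := ‖q - p‖ ^ 2 / 2) fun t ht => ?_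
  have hmin := hp (p + t • (q - p))
  have hconv : g (p + t • (q - p)) ≤ (1 - t) * g p + t * g q := by
    have := hg.2 (mem_univ p) (mem_univ q) (sub_nonneg.2 ht.2.le) ht.1.le (sub_add_cancel 1 t)
    rwa [show (1 - t) • p + t • q = p + t • (q - p) by module] at this
  have hnorm : ‖p + t • (q - p) - y‖ ^ 2
      = ‖p - y‖ ^ 2 - 2 * t * ⟪y - p, q - p⟫_ℝ + t ^ 2 * ‖q - p‖ ^ 2 := by
    rw [add_sub_right_comm, norm_add_sq_real, real_inner_smul_right, norm_smul,
      Real.norm_of_nonneg ht.1.le, ← neg_sub y p, inner_neg_left]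
    ring
  have hdecrease : (2 * t * ⟪y - p, q - p⟫_ℝ - t ^ 2 * ‖q - p‖ ^ 2) / (2 * η)
      ≤ t * (g q - g p) := by
    rw [hnorm] at hmin
    have : (‖p - y‖ ^ 2 - 2 * t * ⟪y - p, q - p⟫_ℝ + t ^ 2 * ‖q - p‖ ^ 2) / (2 * η)
        = ‖p - y‖ ^ 2 / (2 * η) - (2 * t * ⟪y - p, q - p⟫_ℝ - t ^ 2 * ‖q - p‖ ^ 2) / (2 * η) := by
      ring
    linarith
  rw [div_le_iff₀ (by positivity)] at hdecrease
  refine le_of_mul_le_mul_left ?_ (mul_pos two_pos ht.1)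
  linear_combination hdecrease

lemma norm_sub_sq_le_inner (hg : ConvexOn ℝ univ g) (hη : 0 < η) {y₁ y₂ p₁ p₂ : E}
    (h₁ : IsProxPoint g η y₁ p₁) (h₂ : IsProxPoint g η y₂ p₂) :
    ‖p₁ - p₂‖ ^ 2 ≤ ⟪y₁ - y₂, p₁ - p₂⟫_ℝ := by
  have h₁₂ := h₁.inner_le hg hη p₂
  have h₂₁ := h₂.inner_le hg hη p₁
  rw [← neg_sub p₁ p₂, inner_neg_right] at h₁₂
  rw [← real_inner_self_eq_norm_sq, ← sub_nonneg, ← inner_sub_left, sub_sub_sub_comm,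
    inner_sub_left]
  linarith

lemma norm_sub_le (hg : ConvexOn ℝ univ g) (hη : 0 < η) {y₁ y₂ p₁ p₂ : E}
    (h₁ : IsProxPoint g η y₁ p₁) (h₂ : IsProxPoint g η y₂ p₂) : ‖p₁ - p₂‖ ≤ ‖y₁ - y₂‖ := by
  have := (h₁.norm_sub_sq_le_inner hg hη h₂).trans (real_inner_le_norm _ _)
  nlinarith [norm_nonneg (p₁ - p₂), norm_nonneg (y₁ - y₂)]

end IsProxPoint

end

/-- If `f` is `μ`-strongly convex with `L`-Lipschitz gradient and
`0 < η ≤ 2/(μ+L)`, then `F x = x - η ∇f x` is a `(1 - ημ)`-contraction;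
consequently the forward-backward map `prox_{ηg} ∘ F` is also a
`(1 - ημ)`-contraction and has a unique fixed point. -/
theorem strongly_convex_gradient_map_contraction
    {n : ℕ} (f g : EuclideanSpace ℝ (Fin n) → ℝ)
    (f' : EuclideanSpace ℝ (Fin n) → EuclideanSpace ℝ (Fin n))
    (μ L : ℝ) (hμ : 0 < μ) (hμL : μ ≤ L)
    (hf : StrongConvexOn Set.univ μ f)
    (hf' : ∀ x, HasGradientAt f (f' x) x)
    (hlip : ∀ x y, ‖f' x - f' y‖ ≤ L * ‖x - y‖)
    (hg : ConvexOn ℝ Set.univ g)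
    (η : ℝ) (hη₁ : 0 < η) (hη₂ : η ≤ 2 / (μ + L))
    (prox : EuclideanSpace ℝ (Fin n) → EuclideanSpace ℝ (Fin n))
    (hprox : ∀ y x, g (prox y) + ‖prox y - y‖ ^ 2 / (2 * η)
        ≤ g x + ‖x - y‖ ^ 2 / (2 * η)) :
    (∀ x y : EuclideanSpace ℝ (Fin n),
      ‖(x - η • f' x) - (y - η • f' y)‖ ≤ (1 - η * μ) * ‖x - y‖) ∧
    (∀ x y : EuclideanSpace ℝ (Fin n),
      ‖prox (x - η • f' x) - prox (y - η • f' y)‖ ≤ (1 - η * μ) * ‖x - y‖) ∧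
    (∃! xstar : EuclideanSpace ℝ (Fin n), prox (xstar - η • f' xstar) = xstar) := by
  have hηL : η * (μ + L) ≤ 2 := (le_div_iff₀ (by linarith)).mp hη₂
  have hF := hf.norm_gradient_step_sub_le hμL hf' hlip hη₁.le hηL
  have hT : ∀ x y : EuclideanSpace ℝ (Fin n),
      ‖prox (x - η • f' x) - prox (y - η • f' y)‖ ≤ (1 - η * μ) * ‖x - y‖ := fun x y =>
    (IsProxPoint.norm_sub_le hg hη₁ (hprox _) (hprox _)).trans (hF x y)
  have hημ : 0 ≤ 1 - η * μ := by nlinarith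
  have hcontr : ContractingWith (1 - η * μ).toNNReal fun x => prox (x - η • f' x) :=
    ⟨Real.toNNReal_lt_one.2 (by linarith [mul_pos hη₁ hμ]), LipschitzWith.of_dist_le_mul
      fun x y => by simpa only [Real.coe_toNNReal _ hημ, dist_eq_norm] using hT x y⟩
  exact ⟨hF, hT, hcontr.fixedPoint _, hcontr.fixedPoint_isFixedPt,
    fun _ hx => hcontr.fixedPoint_unique hx⟩
end
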